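/- arXiv:2605.14687 — 4 statements merged into one kernel-verified Lean document; each statement's English description precedes it below -/
import Mathlib

section
/- Define sequences of polynomials A_j, B_j, C_j (in variables k_1,...,k_{j+1}) by A_1 = 1 + k_2 + k_1(k_2+2), B_1 = k_2+1, C_1 = k_2+2, and recurrences C_j = B_{j-1} + (k_{j+1}+1)C_{j-1}, B_j = B_{j-1} + k_{j+1} C_{j-1}, A_j = (A_{j-1} C_j - 1)/C_{j-1}. Then for all j ≥ 1, A_j C_{j-1} = A_{j-1} C_j - 1 holds with A_j a polynomial (i.e., C_{j-1} divides A_{j-1}C_j - 1 in the polynomial ring), where A_0 = 1 + k_1, B_0 = 1, C_0 = 1. -/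
/-!
Eliminating `B` (since `B_j = C_j - C_{j-1}`) shows that `C` satisfies the three-term recurrence
`x_{j+1} = (k_{j+2} + 2) x_j - x_{j-1}`. Let `A` be the solution of the same recurrence with the
prescribed `A_0, A_1`. For two solutions of such a recurrence the Casoratian
`x_{j+1} y_j - x_j y_{j+1}` is constant, and for `A, C` its initial value is `-1`.
-/

open MvPolynomial

/-- `BC j = (B_j, C_j)` where `B_0 = C_0 = 1`,
`B_j = B_{j-1} + k_{j+1} C_{j-1}`, `C_j = B_{j-1} + (k_{j+1} + 1) C_{j-1}`,
with variable `k_i` represented by `MvPolynomial.X i`. -/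
noncomputable def BCpoly : ℕ → MvPolynomial ℕ ℝ × MvPolynomial ℕ ℝ
  | 0 => (1, 1)
  | j + 1 =>
      ((BCpoly j).1 + X (j + 2) * (BCpoly j).2,
       (BCpoly j).1 + (X (j + 2) + 1) * (BCpoly j).2)

theorem casoratian_eq_of_recurrence {R : Type*} [CommRing R] (a x y : ℕ → R)
    (hx : ∀ n, x (n + 2) = a n * x (n + 1) - x n)
    (hy : ∀ n, y (n + 2) = a n * y (n + 1) - y n) (n : ℕ) :
    x (n + 1) * y n - x n * y (n + 1) = x 1 * y 0 - x 0 * y 1 := by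
  induction n with
  | zero => rfl
  | succ n ih =>
    rw [hx, hy]
    linear_combination ih

theorem BCpoly_snd_sub_fst (j : ℕ) : (BCpoly (j + 1)).2 - (BCpoly (j + 1)).1 = (BCpoly j).2 := by
  simp only [BCpoly]
  ring

theorem BCpoly_snd_recurrence (j : ℕ) :
    (BCpoly (j + 2)).2 = (X (j + 3) + 2) * (BCpoly (j + 1)).2 - (BCpoly j).2 := by
  have hB := BCpoly_snd_sub_fst j
  rw [BCpoly]
  linear_combination -hB

noncomputable def Apoly : ℕ → MvPolynomial ℕ ℝ
  | 0 => 1 + X 1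
  | 1 => 1 + X 2 + X 1 * (X 2 + 2)
  | j + 2 => (X (j + 3) + 2) * Apoly (j + 1) - Apoly j

theorem Apoly_casoratian (j : ℕ) :
    Apoly (j + 1) * (BCpoly j).2 - Apoly j * (BCpoly (j + 1)).2 = -1 := by
  rw [casoratian_eq_of_recurrence (fun n => X (n + 3) + 2) Apoly (fun n => (BCpoly n).2)
    (fun _ => rfl) BCpoly_snd_recurrence]
  simp only [Apoly, BCpoly]
  ring

/-- Well-definedness of the `A_j` polynomials: there is a sequence of genuine
polynomials `A_j` with `A_0 = 1 + k_1`, `A_1 = 1 + k_2 + k_1 (k_2 + 2)`, satisfying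
`A_j C_{j-1} = A_{j-1} C_j - 1` for all `j ≥ 1`, i.e. the division in the
recurrence `A_j = (A_{j-1} C_j - 1) / C_{j-1}` is exact in the polynomial ring. -/
theorem Apoly_well_defined :
    ∃ A : ℕ → MvPolynomial ℕ ℝ,
      A 0 = 1 + X 1 ∧
      A 1 = 1 + X 2 + X 1 * (X 2 + 2) ∧
      ∀ j : ℕ, 1 ≤ j → A j * (BCpoly (j - 1)).2 = A (j - 1) * (BCpoly j).2 - 1 := by
  refine ⟨Apoly, rfl, rfl, ?_⟩
  rintro (_ | j) hj
  · omega
  · rw [Nat.add_sub_cancel]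
    linear_combination Apoly_casoratian j
end

section
/- With constant parameter k > 0, the sequence B_j defined by B_1 = k+1 and the coupled recurrence (B_j = B_{j-1} + k C_{j-1}, C_j = B_{j-1} + (k+1)C_{j-1}, C_1 = k+2) satisfies B_j = F_{2j+1}(√k) for all j ≥ 1, where F_n(x) is the n-th Fibonacci polynomial defined by F_1(x)=1, F_2(x)=x, F_{n+1}(x)=x F_n(x)+F_{n-1}(x). -/
/-- Fibonacci polynomials as real functions: `F 1 = 1`, `F 2 x = x`,
`F (n+1) x = x * F n x + F (n-1) x` (and `F 0 = 0`). -/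
def fibP : ℕ → ℝ → ℝ
  | 0, _ => 0
  | 1, _ => 1
  | n + 2, x => x * fibP (n + 1) x + fibP n x

/-! For any `x` with `x * x = k`, induction on `j` carries the pair `B j = F_{2j+1}(x)`,
`x * C j = F_{2j+2}(x)`: one step of the coupled recurrence is then two steps of the Fibonacci
recurrence. Tracking `x * C j` rather than `C j = F_{2j+1}(x) + F_{2j}(x) / x` avoids division. -/

theorem fibP_add_two (n : ℕ) (x : ℝ) : fibP (n + 2) x = x * fibP (n + 1) x + fibP n x := rfl

theorem fibP_coupled_step {x k b c : ℝ} (hxk : x * x = k) (n : ℕ)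
    (hb : b = fibP (n + 1) x) (hc : x * c = fibP (n + 2) x) :
    b + k * c = fibP (n + 3) x ∧ x * (b + (k + 1) * c) = fibP (n + 4) x := by
  have h3 : fibP (n + 3) x = x * fibP (n + 2) x + fibP (n + 1) x := fibP_add_two (n + 1) x
  have h4 : fibP (n + 4) x = x * fibP (n + 3) x + fibP (n + 2) x := fibP_add_two (n + 2) x
  subst hb hxk
  constructor
  · rw [h3, ← hc]; ring
  · rw [h4, h3, ← hc]; ring

theorem coupled_eq_fibP {x k : ℝ} (hxk : x * x = k) (B C : ℕ → ℝ)
    (hB1 : B 1 = k + 1) (hC1 : C 1 = k + 2)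
    (hB : ∀ j : ℕ, 2 ≤ j → B j = B (j - 1) + k * C (j - 1))
    (hC : ∀ j : ℕ, 2 ≤ j → C j = B (j - 1) + (k + 1) * C (j - 1)) (j : ℕ) (hj : 1 ≤ j) :
    B j = fibP (2 * j + 1) x ∧ x * C j = fibP (2 * j + 2) x := by
  induction j, hj using Nat.le_induction with
  | base =>
    simp only [fibP, hB1, hC1, ← hxk]
    constructor <;> ring
  | succ n hn ih =>
    have hBn := hB (n + 1) (by omega)
    have hCn := hC (n + 1) (by omega)
    rw [Nat.add_sub_cancel] at hBn hCn
    rw [hBn, hCn]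
    exact fibP_coupled_step hxk (2 * n) ih.1 ih.2

theorem B_eq_fibonacci_poly
    (k : ℝ) (hk : 0 < k) (B C : ℕ → ℝ)
    (hB1 : B 1 = k + 1) (hC1 : C 1 = k + 2)
    (hB : ∀ j : ℕ, 2 ≤ j → B j = B (j - 1) + k * C (j - 1))
    (hC : ∀ j : ℕ, 2 ≤ j → C j = B (j - 1) + (k + 1) * C (j - 1)) :
    ∀ j : ℕ, 1 ≤ j → B j = fibP (2 * j + 1) (Real.sqrt k) := fun j hj =>
  (coupled_eq_fibP (Real.mul_self_sqrt hk.le) B C hB1 hC1 hB hC j hj).1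
end

section
/- For any j ≥ 1 with constant k, the sequence A_j (as in the generalized recurrence with all k_j = k) satisfies the three-term recurrence A_j = (k+2) A_{j-1} - A_{j-2} for j ≥ 3. -/
/-!
Eliminating `B` from the coupled recurrence shows that `C` itself satisfies
`C j = (k + 2) C (j - 1) - C (j - 2)`. The relation `A j C (j - 1) - A (j - 1) C j = -1` says that
the Casoratian of `A` and `C` is constant; for a sequence `A` this forces the same three-term
recurrence as for `C`, once one can divide by `C (j - 1)`, which is positive.
-/

section CoupledRecurrence

variable {R : Type*} [CommRing R] {k : R} {B C : ℕ → R}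

theorem C_eq_sub_of_coupled
    (hB : ∀ j : ℕ, 2 ≤ j → B j = B (j - 1) + k * C (j - 1))
    (hC : ∀ j : ℕ, 2 ≤ j → C j = B (j - 1) + (k + 1) * C (j - 1)) :
    ∀ j : ℕ, 3 ≤ j → C j = (k + 2) * C (j - 1) - C (j - 2) := by
  intro j hj
  obtain ⟨n, rfl⟩ : ∃ n, j = n + 3 := ⟨j - 3, by omega⟩
  have hB₂ : B (n + 2) = B (n + 1) + k * C (n + 1) := hB (n + 2) (by omega)
  have hC₂ : C (n + 2) = B (n + 1) + (k + 1) * C (n + 1) := hC (n + 2) (by omega)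
  have hC₃ : C (n + 3) = B (n + 2) + (k + 1) * C (n + 2) := hC (n + 3) (by omega)
  show C (n + 3) = (k + 2) * C (n + 2) - C (n + 1)
  linear_combination hC₃ + hB₂ - hC₂

theorem pos_of_coupled [LinearOrder R] [IsStrictOrderedRing R] (hk : 0 ≤ k)
    (hB1 : 0 ≤ B 1) (hC1 : 0 < C 1)
    (hB : ∀ j : ℕ, 2 ≤ j → B j = B (j - 1) + k * C (j - 1))
    (hC : ∀ j : ℕ, 2 ≤ j → C j = B (j - 1) + (k + 1) * C (j - 1)) :
    ∀ j : ℕ, 1 ≤ j → 0 ≤ B j ∧ 0 < C j := by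
  intro j hj
  induction j, hj using Nat.le_induction with
  | base => exact ⟨hB1, hC1⟩
  | succ n hn ih =>
    obtain ⟨hBn, hCn⟩ := ih
    rw [hB (n + 1) (by omega), hC (n + 1) (by omega), Nat.add_sub_cancel]
    exact ⟨by positivity, by positivity⟩

end CoupledRecurrence

theorem eq_sub_of_casoratian_const {R : Type*} [CommRing R] [IsDomain R] {t w : R}
    {A C : ℕ → R}
    (hC : ∀ j : ℕ, 3 ≤ j → C j = t * C (j - 1) - C (j - 2))
    (hC_ne : ∀ j : ℕ, 2 ≤ j → C j ≠ 0)
    (hA : ∀ j : ℕ, 2 ≤ j → A j * C (j - 1) = A (j - 1) * C j + w) :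
    ∀ j : ℕ, 3 ≤ j → A j = t * A (j - 1) - A (j - 2) := by
  intro j hj
  obtain ⟨n, rfl⟩ : ∃ n, j = n + 3 := ⟨j - 3, by omega⟩
  have hC₃ : C (n + 3) = t * C (n + 2) - C (n + 1) := hC (n + 3) hj
  have hA₃ : A (n + 3) * C (n + 2) = A (n + 2) * C (n + 3) + w := hA (n + 3) (by omega)
  have hA₂ : A (n + 2) * C (n + 1) = A (n + 1) * C (n + 2) + w := hA (n + 2) (by omega)
  show A (n + 3) = t * A (n + 2) - A (n + 1)
  refine mul_right_cancel₀ (hC_ne (n + 2) (by omega)) ?_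
  linear_combination hA₃ - hA₂ + A (n + 2) * hC₃

theorem A_three_term_recurrence_general
    (k : ℝ) (hk : 0 < k) (A B C : ℕ → ℝ)
    (hB1 : B 1 = k + 1) (hC1 : C 1 = k + 2)
    (hB : ∀ j : ℕ, 2 ≤ j → B j = B (j - 1) + k * C (j - 1))
    (hC : ∀ j : ℕ, 2 ≤ j → C j = B (j - 1) + (k + 1) * C (j - 1))
    (hA : ∀ j : ℕ, 2 ≤ j → A j * C (j - 1) = A (j - 1) * C j - 1) :
    ∀ j : ℕ, 3 ≤ j → A j = (k + 2) * A (j - 1) - A (j - 2) := by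
  have hC_pos := pos_of_coupled hk.le (by rw [hB1]; positivity) (by rw [hC1]; positivity) hB hC
  refine eq_sub_of_casoratian_const (w := -1) (C_eq_sub_of_coupled hB hC)
    (fun j hj ↦ (hC_pos j (by omega)).2.ne') ?_
  simpa only [← sub_eq_add_neg] using hA

theorem A_three_term_recurrence
    (k : ℝ) (hk : 0 < k) (A B C : ℕ → ℝ)
    (hA1 : A 1 = k ^ 2 + 3 * k + 1)
    (hA2 : A 2 = k ^ 3 + 5 * k ^ 2 + 6 * k + 1)
    (hB1 : B 1 = k + 1) (hC1 : C 1 = k + 2)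
    (hB : ∀ j : ℕ, 2 ≤ j → B j = B (j - 1) + k * C (j - 1))
    (hC : ∀ j : ℕ, 2 ≤ j → C j = B (j - 1) + (k + 1) * C (j - 1))
    (hA : ∀ j : ℕ, 2 ≤ j → A j * C (j - 1) = A (j - 1) * C j - 1) :
    ∀ j : ℕ, 3 ≤ j → A j = (k + 2) * A (j - 1) - A (j - 2) :=
  A_three_term_recurrence_general k hk A B C hB1 hC1 hB hC hA
end

section
/- For fixed c > 0, the finite-P harmonic-oscillator partition function Z_P = (F_{2P+1}(c/P) + F_{2P−1}(c/P) − 2)^{−1/2} converges as P → ∞ to 1/(e^{c/2} − e^{−c/2}) = (1/2) csch(c/2). -/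
open Filter Real Topology

/-!
Substituting `x = u - u⁻¹` (the roots of `z² = x z + 1` are `u` and `-u⁻¹`), Binet's formula gives
`F_n(x) (u + u⁻¹) = uⁿ - (-u⁻¹)ⁿ`, hence `F_{2m+1}(x) + F_{2m-1}(x) - 2 = (uᵐ - u⁻ᵐ)²`.
With `u = exp t`, `x = 2 sinh t`, this is `(2 sinh (m t))²`, so
`Z_P = 1 / (2 sinh (P arsinh (c / 2P)))`, and `P arsinh (c / 2P) → c / 2` because `arsinh' 0 = 1`.
-/

theorem fibP_sub_inv_mul_add_inv {u : ℝ} (hu : u ≠ 0) (n : ℕ) :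
    fibP n (u - u⁻¹) * (u + u⁻¹) = u ^ n - (-u⁻¹) ^ n := by
  have hinv : u * u⁻¹ = 1 := mul_inv_cancel₀ hu
  induction n using Nat.twoStepInduction with
  | zero => simp [fibP]
  | one => simp [fibP]
  | more n ih₀ ih₁ =>
    simp only [fibP]
    generalize u⁻¹ = v at *
    linear_combination (u - v) * ih₁ + ih₀ - (u ^ n - (-v) ^ n) * hinv

theorem fibP_odd_add_fibP_odd_sub_two {u : ℝ} (hu : 0 < u) {m : ℕ} (hm : m ≠ 0) :
    fibP (2 * m + 1) (u - u⁻¹) + fibP (2 * m - 1) (u - u⁻¹) - 2 = (u ^ m - u⁻¹ ^ m) ^ 2 := by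
  obtain ⟨k, rfl⟩ := Nat.exists_eq_add_one_of_ne_zero hm
  have hsum : u + u⁻¹ ≠ 0 := by positivity
  have hinv : u * u⁻¹ = 1 := mul_inv_cancel₀ hu.ne'
  have h₁ := fibP_sub_inv_mul_add_inv hu.ne' (2 * (k + 1) + 1)
  have h₂ := fibP_sub_inv_mul_add_inv hu.ne' (2 * (k + 1) - 1)
  rw [show 2 * (k + 1) - 1 = 2 * k + 1 by omega] at h₂ ⊢
  rw [neg_pow, Odd.neg_one_pow ⟨k + 1, rfl⟩] at h₁
  rw [neg_pow, Odd.neg_one_pow ⟨k, rfl⟩] at h₂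
  apply mul_right_cancel₀ hsum
  have hk : (u * u⁻¹) ^ (k + 1) = 1 := by rw [hinv, one_pow]
  rw [mul_pow] at hk
  generalize u⁻¹ = v at *
  linear_combination h₁ + h₂ + 2 * (u + v) * hk - (u ^ (2 * k + 1) + v ^ (2 * k + 1)) * hinv

theorem fibP_odd_add_fibP_odd_sub_two_two_mul_sinh (t : ℝ) {m : ℕ} (hm : m ≠ 0) :
    fibP (2 * m + 1) (2 * sinh t) + fibP (2 * m - 1) (2 * sinh t) - 2 = (2 * sinh (m * t)) ^ 2 := by
  have key := fibP_odd_add_fibP_odd_sub_two (exp_pos t) hm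
  have two_mul_sinh (x : ℝ) : 2 * sinh x = exp x - exp (-x) := by rw [sinh_eq]; ring
  rwa [← exp_neg, ← exp_nat_mul, ← exp_nat_mul, mul_neg, ← two_mul_sinh, ← two_mul_sinh] at key

theorem tendsto_nat_mul_apply_div {f : ℝ → ℝ} {f' : ℝ} (hf : HasDerivAt f f' 0) (hf₀ : f 0 = 0)
    (a : ℝ) : Tendsto (fun n : ℕ => n * f (a / n)) atTop (𝓝 (a * f')) := by
  rcases eq_or_ne a 0 with rfl | ha
  · simp [hf₀]
  have hslope := (hasDerivAt_iff_tendsto_slope.mp hf).const_mul a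
  have hdiv : Tendsto (fun n : ℕ => a / n) atTop (𝓝[≠] 0) := by
    refine tendsto_nhdsWithin_iff.mpr ⟨tendsto_const_div_atTop_nhds_zero_nat a, ?_⟩
    filter_upwards [eventually_ne_atTop 0] with n hn
    simpa using ⟨ha, hn⟩
  refine (hslope.comp hdiv).congr' ?_
  filter_upwards [eventually_ne_atTop 0] with n hn
  simp only [Function.comp_apply, slope_def_field, hf₀, sub_zero]
  field_simp

theorem tendsto_nat_mul_arsinh_div (a : ℝ) :
    Tendsto (fun n : ℕ => n * arsinh (a / n)) atTop (𝓝 a) := by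
  simpa using tendsto_nat_mul_apply_div (hasDerivAt_arsinh 0) arsinh_zero a

theorem sq_rpow_neg_half (x : ℝ) : (x ^ 2) ^ (-(1 / 2) : ℝ) = |x|⁻¹ := by
  rw [rpow_neg (sq_nonneg x), ← sqrt_eq_rpow, sqrt_sq_eq_abs]

theorem finite_P_partition_function_limit (c : ℝ) (hc : 0 < c) :
    Tendsto
      (fun P : ℕ =>
        (fibP (2 * P + 1) (c / (P : ℝ)) + fibP (2 * P - 1) (c / (P : ℝ)) - 2)
          ^ (-(1 / 2) : ℝ))
      atTop (nhds (1 / (Real.exp (c / 2) - Real.exp (-c / 2)))) := by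
  have hsinh : 0 < 2 * sinh (c / 2) := by positivity
  have hlim : Tendsto (fun P : ℕ => |2 * sinh (P * arsinh (c / 2 / P))|⁻¹) atTop
      (𝓝 |2 * sinh (c / 2)|⁻¹) :=
    (((continuous_sinh.tendsto _).comp (tendsto_nat_mul_arsinh_div (c / 2))).const_mul 2).abs.inv₀
      (abs_ne_zero.mpr hsinh.ne')
  have hval : (2 * sinh (c / 2))⁻¹ = 1 / (exp (c / 2) - exp (-c / 2)) := by
    rw [sinh_eq, neg_div]; ring
  rw [abs_of_pos hsinh, hval] at hlim
  refine hlim.congr' ?_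
  filter_upwards [eventually_ne_atTop 0] with P hP
  have hx : c / P = 2 * sinh (arsinh (c / 2 / P)) := by rw [sinh_arsinh]; ring
  rw [hx, fibP_odd_add_fibP_odd_sub_two_two_mul_sinh _ hP, sq_rpow_neg_half]
end
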